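/- Let D ⊆ ℝ^d be a measurable set and let q: (0,∞) × D × D → [0,∞) be a measurable kernel satisfying: q_t(x,y) = q_t(y,x) for all t > 0 and x, y ∈ D; the Chapman–Kolmogorov equation q_{s+t}(x,y) = ∫_D q_s(x,z) q_t(z,y) dz for all s, t > 0; the sub-Markov property ∫_D q_t(x,z) dz ≤ 1 for all t > 0 and x ∈ D; and sup_{x,y ∈ D} q_t(x,y) ≤ C₁ for every t ≥ 1/2. Set E(x) = ∫_0^∞ ∫_D q_t(x,z) dz dt. Then there exists a constant C depending only on C₁ such that q_t(x,y) ≤ C E(x) E(y) / t² for all t ≥ 1 and all x, y ∈ D. -/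

import Mathlib

open MeasureTheory Set ENNReal

/-!
Split `t = a + (1/2 + a)` with `a = (t - 1/2)/2` and apply Chapman–Kolmogorov twice: bounding the
middle factor `q_{1/2}` by `C₁` and using symmetry gives
`q_t(x,y) ≤ C₁ P^x(τ_D > a) P^y(τ_D > a)`. The survival probability `s ↦ P^x(τ_D > s)` is
nonincreasing by the sub-Markov property, so `a P^x(τ_D > a) ≤ E(x)`, and `t ≤ 4a`.
-/

theorem AntitoneOn.ofReal_mul_le_setLIntegral_Ioi {f : ℝ → ℝ≥0∞}
    (hf : AntitoneOn f (Ioi 0)) {a : ℝ} (ha : 0 < a) :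
    ENNReal.ofReal a * f a ≤ ∫⁻ s in Ioi 0, f s :=
  calc ENNReal.ofReal a * f a = ∫⁻ _ in Ioc 0 a, f a := by
        rw [setLIntegral_const, Real.volume_Ioc, sub_zero, mul_comm]
    _ ≤ ∫⁻ s in Ioc 0 a, f s :=
        setLIntegral_mono' measurableSet_Ioc fun s hs => hf hs.1 ha hs.2
    _ ≤ ∫⁻ s in Ioi 0, f s := lintegral_mono_set Ioc_subset_Ioi_self

section KilledKernel

variable {α : Type*} [MeasurableSpace α] {μ : Measure α} {D : Set α}
  {q : ℝ → α → α → ℝ≥0∞}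

theorem setLIntegral_kernel_antitoneOn [SFinite μ] (hD : MeasurableSet D)
    (hq : ∀ t, Measurable (Function.uncurry (q t)))
    (hck : ∀ s > (0 : ℝ), ∀ t > (0 : ℝ), ∀ x ∈ D, ∀ y ∈ D,
      q (s + t) x y = ∫⁻ z in D, q s x z * q t z y ∂μ)
    (hsub : ∀ t > (0 : ℝ), ∀ x ∈ D, (∫⁻ z in D, q t x z ∂μ) ≤ 1)
    {x : α} (hx : x ∈ D) :
    AntitoneOn (fun t => ∫⁻ z in D, q t x z ∂μ) (Ioi 0) := by
  intro a (ha : 0 < a) b _ hab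
  rcases hab.eq_or_lt with rfl | hab
  · rfl
  have hba : 0 < b - a := sub_pos.2 hab
  have hmeas : Measurable fun p : α × α => q a x p.2 * q (b - a) p.2 p.1 :=
    ((hq a).comp (measurable_const.prodMk measurable_snd)).mul ((hq (b - a)).comp measurable_swap)
  calc ∫⁻ z in D, q b x z ∂μ
        = ∫⁻ z in D, ∫⁻ w in D, q a x w * q (b - a) w z ∂μ ∂μ := by
        refine setLIntegral_congr_fun hD fun z hz => ?_
        rw [← hck a ha (b - a) hba x hx z hz, add_sub_cancel]
    _ = ∫⁻ w in D, q a x w * ∫⁻ z in D, q (b - a) w z ∂μ ∂μ := by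
        rw [lintegral_lintegral_swap hmeas.aemeasurable]
        exact lintegral_congr fun w =>
          lintegral_const_mul _ (hq (b - a)).of_uncurry_left
    _ ≤ ∫⁻ w in D, q a x w ∂μ :=
        setLIntegral_mono' hD fun w hw => mul_le_of_le_one_right' (hsub (b - a) hba w hw)

theorem kernel_add_le_mul_setLIntegral (hD : MeasurableSet D)
    (hq : ∀ t, Measurable (Function.uncurry (q t)))
    (hsym : ∀ t > (0 : ℝ), ∀ x ∈ D, ∀ y ∈ D, q t x y = q t y x)
    (hck : ∀ s > (0 : ℝ), ∀ t > (0 : ℝ), ∀ x ∈ D, ∀ y ∈ D,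
      q (s + t) x y = ∫⁻ z in D, q s x z * q t z y ∂μ)
    {s t : ℝ} (hs : 0 < s) (ht : 0 < t) {c : ℝ≥0∞} {z y : α} (hz : z ∈ D) (hy : y ∈ D)
    (hbd : ∀ w ∈ D, q s z w ≤ c) :
    q (s + t) z y ≤ c * ∫⁻ w in D, q t y w ∂μ :=
  calc q (s + t) z y = ∫⁻ w in D, q s z w * q t w y ∂μ := hck s hs t ht z hz y hy
    _ ≤ ∫⁻ w in D, c * q t y w ∂μ :=
        setLIntegral_mono' hD fun w hw => by rw [hsym t ht w hw y hy]; gcongr; exact hbd w hw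
    _ = c * ∫⁻ w in D, q t y w ∂μ :=
        lintegral_const_mul _ (hq t).of_uncurry_left

theorem kernel_le_mul_setLIntegral_mul_setLIntegral (hD : MeasurableSet D)
    (hq : ∀ t, Measurable (Function.uncurry (q t)))
    (hsym : ∀ t > (0 : ℝ), ∀ x ∈ D, ∀ y ∈ D, q t x y = q t y x)
    (hck : ∀ s > (0 : ℝ), ∀ t > (0 : ℝ), ∀ x ∈ D, ∀ y ∈ D,
      q (s + t) x y = ∫⁻ z in D, q s x z * q t z y ∂μ)
    {a s : ℝ} (ha : 0 < a) (hs : 0 < s) {c : ℝ≥0∞}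
    (hbd : ∀ z ∈ D, ∀ w ∈ D, q s z w ≤ c)
    {x y : α} (hx : x ∈ D) (hy : y ∈ D) :
    q (a + (s + a)) x y ≤ c * ((∫⁻ z in D, q a x z ∂μ) * ∫⁻ z in D, q a y z ∂μ) :=
  calc q (a + (s + a)) x y = ∫⁻ z in D, q a x z * q (s + a) z y ∂μ :=
        hck a ha (s + a) (by linarith) x hx y hy
    _ ≤ ∫⁻ z in D, q a x z * (c * ∫⁻ w in D, q a y w ∂μ) ∂μ :=
        setLIntegral_mono' hD fun z hz => by
          gcongr; exact kernel_add_le_mul_setLIntegral hD hq hsym hck hs ha hz hy (hbd z hz)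
    _ = c * ((∫⁻ z in D, q a x z ∂μ) * ∫⁻ z in D, q a y z ∂μ) := by
        rw [lintegral_mul_const _ ((hq a).of_uncurry_left)]
        ring

end KilledKernel

theorem killed_density_bound (d : ℕ) (C₁ : ℝ) (hC₁ : 0 < C₁) :
    ∃ C : ℝ, 0 < C ∧
      ∀ (D : Set (EuclideanSpace ℝ (Fin d))), MeasurableSet D →
      ∀ q : ℝ → EuclideanSpace ℝ (Fin d) → EuclideanSpace ℝ (Fin d) → ENNReal,
        Measurable (fun tp : ℝ × EuclideanSpace ℝ (Fin d) × EuclideanSpace ℝ (Fin d) =>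
          q tp.1 tp.2.1 tp.2.2) →
        (∀ t > (0 : ℝ), ∀ x ∈ D, ∀ y ∈ D, q t x y = q t y x) →
        (∀ s > (0 : ℝ), ∀ t > (0 : ℝ), ∀ x ∈ D, ∀ y ∈ D,
          q (s + t) x y = ∫⁻ z in D, q s x z * q t z y) →
        (∀ t > (0 : ℝ), ∀ x ∈ D, (∫⁻ z in D, q t x z) ≤ 1) →
        (∀ t ≥ (1 : ℝ) / 2, ∀ x ∈ D, ∀ y ∈ D, q t x y ≤ ENNReal.ofReal C₁) →
        ∀ t ≥ (1 : ℝ), ∀ x ∈ D, ∀ y ∈ D,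
          q t x y ≤ ENNReal.ofReal C *
            ((∫⁻ s in Set.Ioi (0 : ℝ), ∫⁻ z in D, q s x z) *
              (∫⁻ s in Set.Ioi (0 : ℝ), ∫⁻ z in D, q s y z)) /
            ENNReal.ofReal (t ^ 2) := by
  refine ⟨16 * C₁, by positivity, ?_⟩
  intro D hD q hq hsym hck hsub hbd t ht x hx y hy
  have hq_uncurry (s : ℝ) : Measurable (Function.uncurry (q s)) :=
    hq.comp (measurable_const.prodMk measurable_id)
  set a := (t - 1 / 2) / 2 with ha_def
  have ha : 0 < a := by rw [ha_def]; linarith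
  have hkernel := kernel_le_mul_setLIntegral_mul_setLIntegral hD hq_uncurry hsym hck ha one_half_pos
    (hbd (1 / 2) le_rfl) hx hy
  rw [show a + (1 / 2 + a) = t by ring] at hkernel
  have hE : ∀ z ∈ D, ENNReal.ofReal a * ∫⁻ w in D, q a z w ≤
      ∫⁻ s in Ioi 0, ∫⁻ w in D, q s z w := fun z hz =>
    (setLIntegral_kernel_antitoneOn hD hq_uncurry hck hsub hz).ofReal_mul_le_setLIntegral_Ioi ha
  rw [ENNReal.le_div_iff_mul_le (Or.inl (ENNReal.ofReal_pos.2 (by positivity)).ne')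
    (Or.inl ofReal_ne_top)]
  calc q t x y * ENNReal.ofReal (t ^ 2)
      ≤ ENNReal.ofReal C₁ * ((∫⁻ w in D, q a x w) * ∫⁻ w in D, q a y w) *
          ENNReal.ofReal ((4 * a) ^ 2) := by
        gcongr; rw [ha_def]; linarith
    _ = ENNReal.ofReal (16 * C₁) * ((ENNReal.ofReal a * ∫⁻ w in D, q a x w) *
          (ENNReal.ofReal a * ∫⁻ w in D, q a y w)) := by
        rw [ENNReal.ofReal_mul (by norm_num), ENNReal.ofReal_pow (by positivity),
          ENNReal.ofReal_mul (by norm_num), ENNReal.ofReal_ofNat, ENNReal.ofReal_ofNat]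
        ring
    _ ≤ _ := by gcongr <;> exact hE _ ‹_›
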